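/- arXiv:1104.4606 — 2 statements merged into one kernel-verified Lean document; each statement's English description precedes it below -/
import Mathlib

section
/- Substitution commutes with bounded quantification: ((∀x_i)A)[t_1, t_2, ...] = (∀x_j)(A[t_1, ..., t_{i-1}, x_j, t_{i+1}, ...]) provided each t_k (k ≠ i with x_k free in A) is independent of x_j. -/
/-- A first-order language: function and predicate symbols of each arity,
    with a distinguished 0-ary predicate symbol `ff` (falsum). -/
structure Lang where
  Func : ℕ → Type
  Pred : ℕ → Type
  ff : Pred 0

/-- Terms of `L` over a set `C` of parameters (variables are 0-indexed:
    `var i` is the variable `x_{i+1}` of the paper). -/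
inductive Tm (L : Lang) (C : Type) : Type where
  | var : ℕ → Tm L C
  | param : C → Tm L C
  | func : {n : ℕ} → L.Func n → (Fin n → Tm L C) → Tm L C

variable {L : Lang} {C : Type}

/-- Substitution `t[t₁, t₂, ...]` on terms. -/
def Tm.subst : Tm L C → (ℕ → Tm L C) → Tm L C
  | .var i, s => s i
  | .param c, _ => .param c
  | .func f ts, s => .func f (fun k => (ts k).subst s)

/-- `t⁺ = t[x₂, x₃, ...]`. -/
def Tm.shift (t : Tm L C) : Tm L C := t.subst fun i => .var (i + 1)

/-- The sequence `x₁, t₁⁺, t₂⁺, ...` used in the clause for `∀` in formula substitution. -/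
def liftSeq (s : ℕ → Tm L C) : ℕ → Tm L C
  | 0 => .var 0
  | n + 1 => (s n).shift

/-- Formulas of `L` over `C`: atomic formulas, implication and `∀`. -/
inductive Fml (L : Lang) (C : Type) : Type where
  | pred : {n : ℕ} → L.Pred n → (Fin n → Tm L C) → Fml L C
  | imp : Fml L C → Fml L C → Fml L C
  | all : Fml L C → Fml L C

/-- Substitution `A[t₁, t₂, ...]` on formulas:
    `(∀A)[t₁,t₂,...] = ∀(A[x₁, t₁⁺, t₂⁺, ...])`. -/
def Fml.subst : Fml L C → (ℕ → Tm L C) → Fml L C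
  | .pred P ts, s => .pred P (fun k => (ts k).subst s)
  | .imp A B, s => .imp (A.subst s) (B.subst s)
  | .all A, s => .all (A.subst (liftSeq s))

/-- The sequence `x₂, x₃, ...` (so `D⁺ = D.subst (plusSeq L C)`). -/
def plusSeq (L : Lang) (C : Type) : ℕ → Tm L C := fun i => .var (i + 1)

/-- The sequence `x₁, x₁, x₂, ...` (so `D⁻ = D.subst (minusSeq L C)`). -/
def minusSeq (L : Lang) (C : Type) : ℕ → Tm L C
  | 0 => .var 0
  | n + 1 => .var n

/-- The sequence substituting `t` for the variable `var i` and fixing all other variables,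
    i.e. `D[t/x_{i+1}]` in the paper's (1-indexed) notation. -/
def singleSeq (i : ℕ) (t : Tm L C) : ℕ → Tm L C := fun j => if j = i then t else .var j

/-- A term is independent of the variable `var i` if `t = t[x_{i+2}/x_{i+1}]`. -/
def Tm.Indep (i : ℕ) (t : Tm L C) : Prop := t.subst (singleSeq i (.var (i + 1))) = t

/-- A formula is independent of the variable `var i` if `A = A[x_{i+2}/x_{i+1}]`. -/
def Fml.Indep (i : ℕ) (A : Fml L C) : Prop := A.subst (singleSeq i (.var (i + 1))) = A

/-- The variable `var i` is free in `A` iff `A` is not independent of it. -/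
def Fml.FreeIn (i : ℕ) (A : Fml L C) : Prop := ¬ A.Indep i

/-- `(∀x_{i+1})A := ∀(A[x₂, x₃, ..., x_i, x₁, x_{i+2}, ...])` (0-indexed `i`):
    the substituted sequence sends `var i` to `var 0` and `var j` to `var (j+1)` otherwise. -/
def allQ (i : ℕ) (A : Fml L C) : Fml L C :=
  .all (A.subst fun j => if j = i then .var 0 else .var (j + 1))

/-- The sequence `t, x₁, x₂, ...`. -/
def instSeq (t : Tm L C) : ℕ → Tm L C
  | 0 => t
  | n + 1 => .var n

/-- The atomic formula `FF` (falsum). -/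
def FF (L : Lang) (C : Type) : Fml L C := .pred L.ff (fun i => i.elim0)

/-- `¬A := A ⇒ FF`. -/
def Fml.neg (A : Fml L C) : Fml L C := A.imp (FF L C)

/-- A perfect (Henkin) valuation of `L` over `C`. -/
def PerfectVal (U : Set (Fml L C)) : Prop :=
  FF L C ∉ U ∧
  (∀ A B : Fml L C, A.imp B ∈ U ↔ (A ∉ U ∨ B ∈ U)) ∧
  (∀ A : Fml L C, A.all ∈ U ↔ ∀ t : Tm L C, A.subst (instSeq t) ∈ U)

/-- The first-order axioms A1–A6 (language without equality), closed under prefixing `∀`. -/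
inductive Ax : Fml L C → Prop where
  | a1 (A B : Fml L C) : Ax (A.imp (B.imp A))
  | a2 (A B D : Fml L C) : Ax ((A.imp (B.imp D)).imp ((A.imp B).imp (A.imp D)))
  | a3 (A : Fml L C) : Ax ((A.neg.neg).imp A)
  | a4 (A B : Fml L C) : Ax (((A.imp B).all).imp ((Fml.all A).imp (Fml.all B)))
  | a5 (A : Fml L C) (t : Tm L C) : Ax ((Fml.all A).imp (A.subst (instSeq t)))
  | a6 (A : Fml L C) : Ax (A.imp (Fml.all (A.subst (plusSeq L C))))
  | gen (A : Fml L C) : Ax A → Ax A.all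

/-- A first-order filter of `F(L) = F(L, ∅)`: contains all axioms, closed under modus ponens. -/
def IsFilter (I : Set (Fml L Empty)) : Prop :=
  (∀ A : Fml L Empty, Ax A → A ∈ I) ∧
  ∀ A B : Fml L Empty, A ∈ I → A.imp B ∈ I → B ∈ I

/-- The inclusion `T(L) = T(L, ∅) ⊆ T(L, C)`. -/
def Tm.ofE : Tm L Empty → Tm L C
  | .var i => .var i
  | .param c => c.elim
  | .func f ts => .func f fun k => (ts k).ofE

/-- The inclusion `F(L) = F(L, ∅) ⊆ F(L, C)`. -/
def Fml.ofE : Fml L Empty → Fml L C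
  | .pred P ts => .pred P fun k => (ts k).ofE
  | .imp A B => .imp A.ofE B.ofE
  | .all A => .all A.ofE

/-- A logical valuation of `L`: the trace on `F(L)` of `U_{(t₁,t₂,...)}` for a perfect
    valuation `U` over some set of parameters. -/
def LogicalValuation (V : Set (Fml L Empty)) : Prop :=
  ∃ (C' : Type) (U : Set (Fml L C')) (t : ℕ → Tm L C'),
    PerfectVal U ∧ V = {A : Fml L Empty | (A.ofE : Fml L C').subst t ∈ U}

/-- A subset of `F(L)` is logically closed if it is an intersection of logical valuations. -/
def LogicallyClosed (S : Set (Fml L Empty)) : Prop :=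
  ∃ 𝒱 : Set (Set (Fml L Empty)), (∀ V ∈ 𝒱, LogicalValuation V) ∧ S = ⋂₀ 𝒱

/-- A formula has rank `n` iff it is independent of every variable beyond the first `n`,
    i.e. `A = A[x₁, ..., x_{n-1}, x_n, x_n, ...]`. A sentence is a formula of rank 0. -/
def Fml.hasRank (n : ℕ) (A : Fml L C) : Prop := ∀ i, n ≤ i → A.Indep i

/-- `∀⁰A = A`, `∀ⁿA = ∀(∀ⁿ⁻¹A)`. -/
def forallIter : ℕ → Fml L C → Fml L C
  | 0, A => A
  | n + 1, A => (forallIter n A).all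

/-- Auxiliary: occurrence of variable `var j` in a term. -/
def Tm.free (j : ℕ) : Tm L C → Prop
  | .var i => i = j
  | .param _ => False
  | .func _ ts => ∃ k, (ts k).free j

/-- Auxiliary: free occurrence of variable `var j` in a formula. -/
def Fml.free : ℕ → Fml L C → Prop
  | j, .pred _ ts => ∃ k, (ts k).free j
  | j, .imp A B => A.free j ∨ B.free j
  | j, .all A => A.free (j + 1)

theorem Tm.subst_subst (t : Tm L C) (σ τ : ℕ → Tm L C) :
    (t.subst σ).subst τ = t.subst fun k => (σ k).subst τ := by
  induction t with
  | var i => rfl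
  | param c => rfl
  | func f ts ih => simp [Tm.subst, ih]

theorem Tm.subst_congr {t : Tm L C} {σ τ : ℕ → Tm L C}
    (h : ∀ k, t.free k → σ k = τ k) : t.subst σ = t.subst τ := by
  induction t with
  | var i => exact h i rfl
  | param c => rfl
  | func f ts ih =>
    simp only [Tm.subst]
    congr 1
    funext k
    exact ih k fun m hm => h m ⟨k, hm⟩

theorem Tm.shift_subst (t : Tm L C) (τ : ℕ → Tm L C) :
    (t.subst τ).shift = t.shift.subst (liftSeq τ) := by
  simp only [Tm.shift, Tm.subst_subst]
  exact Tm.subst_congr fun k _ => by simp [Tm.subst, liftSeq, Tm.shift]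

theorem liftSeq_comp (σ τ : ℕ → Tm L C) :
    liftSeq (fun k => (σ k).subst τ) = fun k => (liftSeq σ k).subst (liftSeq τ) := by
  funext k
  cases k with
  | zero => rfl
  | succ n => simp [liftSeq, Tm.shift_subst]

theorem Fml.subst_subst (A : Fml L C) (σ τ : ℕ → Tm L C) :
    (A.subst σ).subst τ = A.subst fun k => (σ k).subst τ := by
  induction A generalizing σ τ with
  | pred P ts => simp [Fml.subst, Tm.subst_subst]
  | imp A B ihA ihB => simp [Fml.subst, ihA, ihB]
  | all A ih => simp [Fml.subst, ih, liftSeq_comp]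

theorem Fml.subst_congr {A : Fml L C} {σ τ : ℕ → Tm L C}
    (h : ∀ k, A.free k → σ k = τ k) : A.subst σ = A.subst τ := by
  induction A generalizing σ τ with
  | pred P ts =>
    simp only [Fml.subst]
    congr 1
    funext k
    exact Tm.subst_congr fun m hm => h m ⟨k, hm⟩
  | imp A B ihA ihB =>
    simp only [Fml.subst]
    rw [ihA fun k hk => h k (Or.inl hk), ihB fun k hk => h k (Or.inr hk)]
  | all A ih =>
    simp only [Fml.subst]
    congr 1
    apply ih
    intro k hk
    cases k with
    | zero => rfl
    | succ n => simp [liftSeq, h n hk]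

theorem liftSeq_singleSeq (j : ℕ) :
    liftSeq (singleSeq j (Tm.var (j + 1)) : ℕ → Tm L C)
      = singleSeq (j + 1) (.var (j + 2)) := by
  funext k
  cases k with
  | zero => simp [liftSeq, singleSeq]
  | succ n =>
    by_cases hn : n = j <;>
      simp [liftSeq, singleSeq, hn, Tm.shift, Tm.subst]

theorem Tm.free_ne {t : Tm L C} {j : ℕ} (h : t.free j) :
    t.subst (singleSeq j (.var (j + 1))) ≠ t := by
  induction t with
  | var i =>
    have hij : i = j := h
    subst hij
    simp [Tm.subst, singleSeq]
  | param c => exact absurd h (by simp [Tm.free])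
  | func f ts ih =>
    obtain ⟨k, hk⟩ := h
    intro he
    simp only [Tm.subst, Tm.func.injEq, heq_eq_eq, true_and] at he
    exact ih k hk (congrFun he k)

theorem Fml.free_ne {A : Fml L C} {j : ℕ} (h : A.free j) :
    A.subst (singleSeq j (.var (j + 1))) ≠ A := by
  induction A generalizing j with
  | pred P ts =>
    obtain ⟨k, hk⟩ := h
    intro he
    simp only [Fml.subst, Fml.pred.injEq, heq_eq_eq, true_and] at he
    exact Tm.free_ne hk (congrFun he k)
  | imp A B ihA ihB =>
    intro he
    simp only [Fml.subst, Fml.imp.injEq] at he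
    rcases h with h | h
    · exact ihA h he.1
    · exact ihB h he.2
  | all A ih =>
    intro he
    simp only [Fml.subst, liftSeq_singleSeq, Fml.all.injEq] at he
    exact ih (h : A.free (j + 1)) he

/-- `((∀x_i)A)[t₁, t₂, ...] = (∀x_j)(A[t₁, ..., t_{i-1}, x_j, t_{i+1}, ...])`
provided each `t_k` (`k ≠ i` with `x_k` free in `A`) is independent of `x_j`. -/
theorem allQ_subst {L : Lang} {C : Type} (i j : ℕ) (A : Fml L C) (s : ℕ → Tm L C)
    (h : ∀ k, k ≠ i → A.FreeIn k → (s k).Indep j) :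
    (allQ i A).subst s = allQ j (A.subst fun k => if k = i then .var j else s k) := by
  unfold allQ
  simp only [Fml.subst]
  congr 1
  rw [Fml.subst_subst, Fml.subst_subst]
  apply Fml.subst_congr
  intro k hk
  by_cases hki : k = i
  · subst hki
    simp [Tm.subst, liftSeq, singleSeq]
  · simp only [if_neg hki]
    have hIndep : (s k).Indep j := h k hki (Fml.free_ne hk)
    have hfree : ¬ (s k).free j := fun hf => Tm.free_ne hf hIndep
    show liftSeq s (k + 1) = _
    show (s k).shift = _
    unfold Tm.shift
    apply Tm.subst_congr
    intro m hm
    have hmj : m ≠ j := fun e => hfree (e ▸ hm)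
    simp [hmj]
end

section
/- Completeness Theorem: every first-order filter of F(L) is logically closed; consequently, for any set S of formulas, Con(S) = Ded(S), i.e. S ⊨ A iff S ⊢ A. -/
variable {L : Lang} {C : Type}

/-!
The proof is Henkin's. Soundness is the statement that every perfect valuation contains all
substitution instances of the axioms and is closed under modus ponens, so logical valuations
are filters. Conversely, if `A ∉ I` for a filter `I`, then `I ∪ {¬A}` is consistent. Adjoin, in
countably many stages, a constant `c_B` for each formula `B` together with the Henkin axiom
`B[c_B] ⇒ ∀B`; these axioms keep the theory consistent, since a proof of `B[c]` from premises not
mentioning `c` becomes a proof of `∀B` once `c` is turned into a bound variable. A maximal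
consistent extension of the result (Lindenbaum) is a perfect valuation omitting `A`.
-/

variable {C' C'' : Type}

def Tm.msubst : Tm L C → (ℕ → Tm L C') → (C → Tm L C') → Tm L C'
  | .var i, σ, _ => σ i
  | .param c, _, π => π c
  | .func f ts, σ, π => .func f fun k => (ts k).msubst σ π

def Fml.msubst : Fml L C → (ℕ → Tm L C') → (C → Tm L C') → Fml L C'
  | .pred P ts, σ, π => .pred P fun k => (ts k).msubst σ π
  | .imp A B, σ, π => .imp (A.msubst σ π) (B.msubst σ π)
  | .all A, σ, π => .all (A.msubst (liftSeq σ) fun c => (π c).shift)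

namespace Tm

theorem msubst_msubst (t : Tm L C) (σ₁ : ℕ → Tm L C') (π₁ : C → Tm L C')
    (σ₂ : ℕ → Tm L C'') (π₂ : C' → Tm L C'') :
    (t.msubst σ₁ π₁).msubst σ₂ π₂
      = t.msubst (fun i => (σ₁ i).msubst σ₂ π₂) (fun c => (π₁ c).msubst σ₂ π₂) := by
  induction t with
  | var i => rfl
  | param c => rfl
  | func f ts ih => exact congrArg (func f) (funext ih)

theorem msubst_var_param (t : Tm L C) : t.msubst var param = t := by
  induction t with
  | var i => rfl
  | param c => rfl
  | func f ts ih => exact congrArg (func f) (funext ih)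

theorem subst_eq_msubst (t : Tm L C) (s : ℕ → Tm L C) : t.subst s = t.msubst s param := by
  induction t with
  | var i => rfl
  | param c => rfl
  | func f ts ih => exact congrArg (func f) (funext ih)

theorem shift_eq_msubst (t : Tm L C) : t.shift = t.msubst (fun i => var (i + 1)) param :=
  subst_eq_msubst _ _

theorem msubst_shift (t : Tm L C) (σ : ℕ → Tm L C') (π : C → Tm L C') :
    t.shift.msubst σ π = t.msubst (fun i => σ (i + 1)) π := by
  rw [shift_eq_msubst, msubst_msubst]
  rfl

theorem shift_msubst (t : Tm L C) (σ : ℕ → Tm L C') (π : C → Tm L C') :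
    (t.msubst σ π).shift = t.msubst (fun i => (σ i).shift) fun c => (π c).shift := by
  rw [shift_eq_msubst, msubst_msubst]
  simp only [← shift_eq_msubst]

theorem ofE_eq_msubst (t : Tm L Empty) : (t.ofE : Tm L C) = t.msubst var Empty.elim := by
  induction t with
  | var i => rfl
  | param c => exact c.elim
  | func f ts ih => exact congrArg (func f) (funext ih)

end Tm

theorem liftSeq_var : liftSeq (Tm.var : ℕ → Tm L C) = Tm.var := by
  funext i
  cases i <;> rfl

theorem liftSeq_msubst (s : ℕ → Tm L C) (σ : ℕ → Tm L C') (π : C → Tm L C') :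
    (fun i => (liftSeq s i).msubst (liftSeq σ) fun c => (π c).shift)
      = liftSeq fun i => (s i).msubst σ π := by
  funext i
  cases i with
  | zero => rfl
  | succ n => exact (Tm.msubst_shift _ _ _).trans (Tm.shift_msubst _ _ _).symm

namespace Fml

theorem msubst_msubst (A : Fml L C) (σ₁ : ℕ → Tm L C') (π₁ : C → Tm L C')
    (σ₂ : ℕ → Tm L C'') (π₂ : C' → Tm L C'') :
    (A.msubst σ₁ π₁).msubst σ₂ π₂
      = A.msubst (fun i => (σ₁ i).msubst σ₂ π₂) (fun c => (π₁ c).msubst σ₂ π₂) := by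
  induction A generalizing σ₁ π₁ σ₂ π₂ with
  | pred P ts => exact congrArg (pred P) (funext fun k => (ts k).msubst_msubst ..)
  | imp A B ihA ihB => exact congrArg₂ imp (ihA ..) (ihB ..)
  | all A ih =>
      refine congrArg all ((ih ..).trans ?_)
      rw [liftSeq_msubst]
      simp only [Tm.msubst_shift, Tm.shift_msubst]
      rfl

theorem msubst_var_param (A : Fml L C) : A.msubst Tm.var Tm.param = A := by
  induction A with
  | pred P ts => exact congrArg (pred P) (funext fun k => (ts k).msubst_var_param)
  | imp A B ihA ihB => exact congrArg₂ imp ihA ihB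
  | all A ih =>
      refine congrArg all ?_
      rw [liftSeq_var]
      exact ih

theorem subst_eq_msubst (A : Fml L C) (s : ℕ → Tm L C) : A.subst s = A.msubst s Tm.param := by
  induction A generalizing s with
  | pred P ts => exact congrArg (pred P) (funext fun k => (ts k).subst_eq_msubst s)
  | imp A B ihA ihB => exact congrArg₂ imp (ihA s) (ihB s)
  | all A ih => exact congrArg all (ih _)

theorem subst_var (A : Fml L C) : A.subst Tm.var = A := by
  rw [subst_eq_msubst, msubst_var_param]

theorem subst_subst_s17 (A : Fml L C) (s₁ s₂ : ℕ → Tm L C) :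
    (A.subst s₁).subst s₂ = A.subst fun i => (s₁ i).subst s₂ := by
  simp only [subst_eq_msubst, msubst_msubst, Tm.subst_eq_msubst]
  rfl

theorem ofE_eq_msubst (A : Fml L Empty) : (A.ofE : Fml L C) = A.msubst Tm.var Empty.elim := by
  induction A with
  | pred P ts => exact congrArg (pred P) (funext fun k => (ts k).ofE_eq_msubst)
  | imp A B ihA ihB => exact congrArg₂ imp ihA ihB
  | all A ih =>
      rw [msubst, liftSeq_var]
      exact congrArg all (ih.trans (congrArg _ (funext fun c => c.elim)))

theorem msubst_ofE (A : Fml L Empty) (π : C → Tm L Empty) : (A.ofE : Fml L C).msubst Tm.var π = A := by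
  rw [ofE_eq_msubst, msubst_msubst]
  exact (congrArg₂ _ rfl (funext fun c => c.elim)).trans A.msubst_var_param

end Fml

theorem FF_msubst (σ : ℕ → Tm L C') (π : C → Tm L C') : (FF L C).msubst σ π = FF L C' :=
  congrArg (Fml.pred L.ff) (funext fun k => k.elim0)

theorem Fml.neg_msubst (A : Fml L C) (σ : ℕ → Tm L C') (π : C → Tm L C') :
    A.neg.msubst σ π = (A.msubst σ π).neg :=
  congrArg (Fml.imp _) (FF_msubst σ π)

theorem Fml.ofE_FF : (FF L Empty).ofE = FF L C := by
  rw [ofE_eq_msubst, FF_msubst]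

theorem Fml.msubst_inst (A : Fml L C) (t : Tm L C) (σ : ℕ → Tm L C') (π : C → Tm L C') :
    (A.subst (instSeq t)).msubst σ π
      = (A.msubst (liftSeq σ) fun c => (π c).shift).subst (instSeq (t.msubst σ π)) := by
  simp only [subst_eq_msubst, msubst_msubst]
  congr 1
  · funext i
    cases i with
    | zero => rfl
    | succ n => exact (Tm.msubst_shift _ _ _).trans (σ n).msubst_var_param |>.symm
  · funext c
    exact (Tm.msubst_shift _ _ _).trans (π c).msubst_var_param |>.symm

theorem Fml.msubst_plus (A : Fml L C) (σ : ℕ → Tm L C') (π : C → Tm L C') :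
    (A.subst (plusSeq L C)).msubst (liftSeq σ) (fun c => (π c).shift)
      = (A.msubst σ π).subst (plusSeq L C') := by
  simp only [subst_eq_msubst, msubst_msubst]
  congr 1 <;> funext _ <;> exact Tm.shift_eq_msubst _

theorem Fml.subst_plusSeq_instSeq (A : Fml L C) (t : Tm L C) :
    (A.subst (plusSeq L C)).subst (instSeq t) = A := by
  rw [subst_subst_s17]
  exact A.subst_var

theorem Ax.msubst {A : Fml L C} (h : Ax A) (σ : ℕ → Tm L C') (π : C → Tm L C') :
    Ax (A.msubst σ π) := by
  induction h generalizing σ π with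
  | a1 A B => exact .a1 _ _
  | a2 A B D => exact .a2 _ _ _
  | a3 A =>
      show Ax (.imp (A.neg.neg.msubst σ π) _)
      rw [Fml.neg_msubst, Fml.neg_msubst]
      exact .a3 _
  | a4 A B => exact .a4 _ _
  | a5 A t =>
      show Ax (.imp _ ((A.subst (instSeq t)).msubst σ π))
      rw [Fml.msubst_inst]
      exact .a5 _ _
  | a6 A =>
      show Ax (.imp _ (.all ((A.subst (plusSeq L C)).msubst _ _)))
      rw [Fml.msubst_plus]
      exact .a6 _
  | gen A _ ih => exact .gen _ (ih _ _)

theorem Ax.ofE {A : Fml L Empty} (h : Ax A) : Ax (A.ofE : Fml L C) := by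
  rw [Fml.ofE_eq_msubst]
  exact h.msubst _ _

inductive Prov (S : Set (Fml L C)) : Fml L C → Prop where
  | ax {A} : Ax A → Prov S A
  | hyp {A} : A ∈ S → Prov S A
  | mp {A B} : Prov S A → Prov S (A.imp B) → Prov S B

def Consistent (S : Set (Fml L C)) : Prop := ¬ Prov S (FF L C)

namespace Prov

variable {S T : Set (Fml L C)} {A B : Fml L C}

theorem mono (h : Prov S A) (hST : S ⊆ T) : Prov T A := by
  induction h with
  | ax h => exact .ax h
  | hyp h => exact .hyp (hST h)
  | mp _ _ ih₁ ih₂ => exact .mp ih₁ ih₂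

theorem msubst (h : Prov S A) (σ : ℕ → Tm L C') (π : C → Tm L C') :
    Prov ((Fml.msubst · σ π) '' S) (A.msubst σ π) := by
  induction h with
  | ax h => exact .ax (h.msubst σ π)
  | hyp h => exact .hyp ⟨_, h, rfl⟩
  | mp _ _ ih₁ ih₂ => exact .mp ih₁ ih₂

theorem imp_self (S : Set (Fml L C)) (A : Fml L C) : Prov S (A.imp A) :=
  .mp (.ax (.a1 A A)) (.mp (.ax (.a1 A (A.imp A))) (.ax (.a2 A (A.imp A) A)))

theorem deduction (h : Prov (insert A S) B) : Prov S (A.imp B) := by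
  induction h with
  | ax h => exact .mp (.ax h) (.ax (.a1 _ A))
  | hyp h =>
      rcases h with rfl | h
      · exact imp_self S _
      · exact .mp (.hyp h) (.ax (.a1 _ A))
  | mp _ _ ih₁ ih₂ => exact .mp ih₁ (.mp ih₂ (.ax (.a2 _ _ _)))

theorem by_contra (h : Prov (insert A.neg S) (FF L C)) : Prov S A :=
  .mp h.deduction (.ax (.a3 A))

theorem exfalso (h : Prov S (FF L C)) (B : Fml L C) : Prov S B :=
  .mp (.mp h (.ax (.a1 _ B.neg))) (.ax (.a3 B))

theorem of_neg_imp (h : Prov S (A.imp B).neg) : Prov S A := by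
  refine by_contra (.mp (deduction ?_) (h.mono (Set.subset_insert _ _)))
  exact exfalso (.mp (.hyp (Set.mem_insert _ _)) (.hyp (Set.mem_insert_of_mem _ (Set.mem_insert _ _)))) B

end Prov

def Tm.params : Tm L C → Set C
  | .var _ => ∅
  | .param c => {c}
  | .func _ ts => ⋃ k, (ts k).params

def Fml.params : Fml L C → Set C
  | .pred _ ts => ⋃ k, (ts k).params
  | .imp A B => A.params ∪ B.params
  | .all A => A.params

namespace Tm

theorem msubst_congr_params {t : Tm L C} {σ : ℕ → Tm L C'} {π π' : C → Tm L C'}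
    (h : ∀ c ∈ t.params, π c = π' c) : t.msubst σ π = t.msubst σ π' := by
  induction t with
  | var i => rfl
  | param c => exact h c rfl
  | func f ts ih =>
      exact congrArg (func f) (funext fun k => ih k fun c hc => h c (Set.mem_iUnion_of_mem k hc))

theorem mem_params_msubst {t : Tm L C} {σ : ℕ → Tm L C'} {π : C → Tm L C'} {c : C'}
    (h : c ∈ (t.msubst σ π).params) :
    (∃ i, c ∈ (σ i).params) ∨ ∃ d ∈ t.params, c ∈ (π d).params := by
  induction t with
  | var i => exact .inl ⟨i, h⟩
  | param d => exact .inr ⟨d, rfl, h⟩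
  | func f ts ih =>
      obtain ⟨k, hk⟩ := Set.mem_iUnion.1 h
      obtain hσ | ⟨d, hd, hπ⟩ := ih k hk
      · exact .inl hσ
      · exact .inr ⟨d, Set.mem_iUnion_of_mem k hd, hπ⟩

theorem params_shift_subset (t : Tm L C) : t.shift.params ⊆ t.params := by
  intro c hc
  rw [shift_eq_msubst] at hc
  obtain ⟨i, hi⟩ | ⟨d, hd, rfl⟩ := mem_params_msubst hc
  exacts [hi.elim, hd]

end Tm

namespace Fml

theorem msubst_congr_params {A : Fml L C} {σ : ℕ → Tm L C'} {π π' : C → Tm L C'}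
    (h : ∀ c ∈ A.params, π c = π' c) : A.msubst σ π = A.msubst σ π' := by
  induction A generalizing σ π π' with
  | pred P ts =>
      exact congrArg (pred P) (funext fun k =>
        Tm.msubst_congr_params fun c hc => h c (Set.mem_iUnion_of_mem k hc))
  | imp A B ihA ihB =>
      exact congrArg₂ imp (ihA fun c hc => h c (.inl hc)) (ihB fun c hc => h c (.inr hc))
  | all A ih => exact congrArg all (ih fun c hc => congrArg Tm.shift (h c hc))

theorem mem_params_msubst {A : Fml L C} {σ : ℕ → Tm L C'} {π : C → Tm L C'} {c : C'}
    (h : c ∈ (A.msubst σ π).params) :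
    (∃ i, c ∈ (σ i).params) ∨ ∃ d ∈ A.params, c ∈ (π d).params := by
  induction A generalizing σ π with
  | pred P ts =>
      obtain ⟨k, hk⟩ := Set.mem_iUnion.1 h
      obtain hσ | ⟨d, hd, hπ⟩ := Tm.mem_params_msubst hk
      · exact .inl hσ
      · exact .inr ⟨d, Set.mem_iUnion_of_mem k hd, hπ⟩
  | imp A B ihA ihB =>
      rcases h with h | h
      · obtain hσ | ⟨d, hd, hπ⟩ := ihA h
        exacts [.inl hσ, .inr ⟨d, .inl hd, hπ⟩]
      · obtain hσ | ⟨d, hd, hπ⟩ := ihB h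
        exacts [.inl hσ, .inr ⟨d, .inr hd, hπ⟩]
  | all A ih =>
      obtain ⟨_ | i, hi⟩ | ⟨d, hd, hπ⟩ := ih h
      · exact hi.elim
      · exact .inl ⟨i, Tm.params_shift_subset _ hi⟩
      · exact .inr ⟨d, hd, Tm.params_shift_subset _ hπ⟩

theorem params_ofE (A : Fml L Empty) : (A.ofE : Fml L C).params = ∅ := by
  refine Set.eq_empty_of_forall_notMem fun c hc => ?_
  rw [ofE_eq_msubst] at hc
  obtain ⟨i, hi⟩ | ⟨d, _, _⟩ := mem_params_msubst hc
  exacts [hi, d.elim]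

end Fml

def abstractParam [DecidableEq C] (c : C) (d : C) : Tm L C :=
  if d = c then .var 0 else .param d

theorem Fml.msubst_abstractParam_of_notMem [DecidableEq C] {A : Fml L C} {c : C}
    (hc : c ∉ A.params) :
    A.msubst (fun i => .var (i + 1)) (abstractParam c) = A.subst (plusSeq L C) := by
  rw [subst_eq_msubst]
  exact msubst_congr_params fun d hd => if_neg (show d ≠ c from fun h => hc (h ▸ hd))

theorem Fml.msubst_abstractParam_inst [DecidableEq C] {A : Fml L C} {c : C}
    (hc : c ∉ A.params) :
    (A.subst (instSeq (.param c))).msubst (fun i => .var (i + 1)) (abstractParam c) = A := by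
  have hσ : (fun i => (instSeq (.param c) i).msubst (fun i => .var (i + 1)) (abstractParam c))
      = (Tm.var : ℕ → Tm L C) := by
    funext i
    cases i with
    | zero => exact if_pos rfl
    | succ n => rfl
  rw [subst_eq_msubst, msubst_msubst, hσ]
  exact (msubst_congr_params fun d hd => if_neg (show d ≠ c from fun h => hc (h ▸ hd))).trans
    A.msubst_var_param

/-- Each line `B` of the derivation becomes `∀ B[x₁/c]` (other variables shifted up); premises
not mentioning `c` are handled by A6, modus ponens by A4. -/
theorem Prov.all_abstractParam [DecidableEq C] {T : Set (Fml L C)} {B : Fml L C} {c : C}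
    (h : Prov T B) (hT : ∀ D ∈ T, c ∉ D.params) :
    Prov T (.all (B.msubst (fun i => .var (i + 1)) (abstractParam c))) := by
  induction h with
  | ax h => exact .ax (.gen _ (h.msubst _ _))
  | @hyp D hD =>
      rw [Fml.msubst_abstractParam_of_notMem (hT D hD)]
      exact .mp (.hyp hD) (.ax (.a6 D))
  | mp _ _ ih₁ ih₂ => exact .mp ih₁ (.mp ih₂ (.ax (.a4 _ _)))

theorem Prov.all_of_inst_param [DecidableEq C] {T : Set (Fml L C)} {A : Fml L C} {c : C}
    (h : Prov T (A.subst (instSeq (.param c)))) (hA : c ∉ A.params)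
    (hT : ∀ D ∈ T, c ∉ D.params) : Prov T A.all := by
  simpa only [Fml.msubst_abstractParam_inst hA] using h.all_abstractParam hT

theorem Consistent.insert_henkin [DecidableEq C] {T : Set (Fml L C)} (hT : Consistent T)
    {A : Fml L C} {c : C} (hA : c ∉ A.params) (hcT : ∀ D ∈ T, c ∉ D.params) :
    Consistent (insert ((A.subst (instSeq (.param c))).imp A.all) T) := by
  intro h
  have hinst : Prov T (A.subst (instSeq (.param c))) := Prov.of_neg_imp h.deduction
  have hall : Prov T A.all := hinst.all_of_inst_param hA hcT
  exact hT (.mp (.mp hall (.ax (.a1 _ _))) h.deduction)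

theorem Prov.exists_finset_of_union_range {ι : Type*} {T : Set (Fml L C)} {f : ι → Fml L C}
    {B : Fml L C} (h : Prov (T ∪ Set.range f) B) :
    ∃ W : Finset ι, Prov (T ∪ f '' W) B := by
  classical
  induction h with
  | ax h => exact ⟨∅, .ax h⟩
  | hyp h =>
      rcases h with h | ⟨i, rfl⟩
      · exact ⟨∅, .hyp (.inl h)⟩
      · exact ⟨{i}, .hyp (.inr ⟨i, by simp⟩)⟩
  | mp _ _ ih₁ ih₂ =>
      obtain ⟨W₁, h₁⟩ := ih₁
      obtain ⟨W₂, h₂⟩ := ih₂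
      have hmono : ∀ W ⊆ W₁ ∪ W₂, T ∪ f '' W ⊆ T ∪ f '' ↑(W₁ ∪ W₂) := fun W hW =>
        Set.union_subset_union_right T (Set.image_mono (Finset.coe_subset.2 hW))
      exact ⟨W₁ ∪ W₂, .mp (h₁.mono (hmono _ Finset.subset_union_left))
        (h₂.mono (hmono _ Finset.subset_union_right))⟩

/-- `Par L n` are the parameters available at stage `n`: at each stage a new constant is added
for every formula of the previous stage. -/
def Par (L : Lang) : ℕ → Type
  | 0 => Empty
  | n + 1 => Par L n ⊕ Fml L (Par L n)

/-- The Henkin constants: `⟨n, A⟩` is the witness for the formula `A` of stage `n`. -/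
def HCon (L : Lang) : Type := Σ n, Fml L (Par L n)

def Par.toHCon : ∀ n, Par L n → HCon L
  | n + 1, .inl p => toHCon n p
  | n + 1, .inr A => ⟨n, A⟩

theorem Par.toHCon_fst_lt : ∀ n (p : Par L n), (toHCon n p).1 < n
  | n + 1, .inl p => (toHCon_fst_lt n p).trans n.lt_succ_self
  | _ + 1, .inr _ => Nat.lt_succ_self _

def pushT (n : ℕ) (t : Tm L (Par L n)) : Tm L (HCon L) :=
  t.msubst .var fun p => .param (Par.toHCon n p)

def pushF (n : ℕ) (A : Fml L (Par L n)) : Fml L (HCon L) :=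
  A.msubst .var fun p => .param (Par.toHCon n p)

theorem range_pushT_mono : Monotone fun n => Set.range (pushT (L := L) n) :=
  monotone_nat_of_le_succ fun n => by
    rintro _ ⟨t, rfl⟩
    exact ⟨t.msubst .var fun p => .param (.inl p), by rw [pushT, Tm.msubst_msubst]; rfl⟩

theorem range_pushF_mono : Monotone fun n => Set.range (pushF (L := L) n) :=
  monotone_nat_of_le_succ fun n => by
    rintro _ ⟨A, rfl⟩
    exact ⟨A.msubst .var fun p => .param (.inl p), by rw [pushF, Fml.msubst_msubst]; rfl⟩

theorem exists_pushT_eq_of_forall {m : ℕ} {ts : Fin m → Tm L (HCon L)}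
    (h : ∀ k, ∃ n, ts k ∈ Set.range (pushT n)) :
    ∃ n, ∃ us : Fin m → Tm L (Par L n), ∀ k, pushT n (us k) = ts k := by
  choose ν hν using h
  choose us hus using fun k =>
    range_pushT_mono (Finset.le_sup (f := ν) (Finset.mem_univ k)) (hν k)
  exact ⟨_, us, hus⟩

theorem exists_mem_range_pushT (t : Tm L (HCon L)) : ∃ n, t ∈ Set.range (pushT n) := by
  induction t with
  | var i => exact ⟨0, .var i, rfl⟩
  | param c => exact ⟨c.1 + 1, .param (.inr c.2), rfl⟩
  | func f ts ih =>
      obtain ⟨n, us, hus⟩ := exists_pushT_eq_of_forall ih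
      exact ⟨n, .func f us, congrArg (Tm.func f) (funext hus)⟩

theorem exists_mem_range_pushF (B : Fml L (HCon L)) : ∃ n, B ∈ Set.range (pushF n) := by
  induction B with
  | pred P ts =>
      obtain ⟨n, us, hus⟩ := exists_pushT_eq_of_forall fun k => exists_mem_range_pushT (ts k)
      exact ⟨n, .pred P us, congrArg (Fml.pred P) (funext hus)⟩
  | imp A B ihA ihB =>
      obtain ⟨n₁, hA⟩ := ihA
      obtain ⟨n₂, hB⟩ := ihB
      obtain ⟨A', rfl⟩ := range_pushF_mono (le_max_left n₁ n₂) hA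
      obtain ⟨B', rfl⟩ := range_pushF_mono (le_max_right n₁ n₂) hB
      exact ⟨_, .imp A' B', rfl⟩
  | all A ih =>
      obtain ⟨n, A', rfl⟩ := ih
      refine ⟨n, .all A', ?_⟩
      rw [pushF, Fml.msubst, liftSeq_var]
      rfl

theorem lt_of_mem_params_pushF {n : ℕ} {A : Fml L (Par L n)} {c : HCon L}
    (h : c ∈ (pushF n A).params) : c.1 < n := by
  obtain ⟨i, hi⟩ | ⟨p, _, rfl⟩ := Fml.mem_params_msubst h
  exacts [hi.elim, Par.toHCon_fst_lt n p]

def henkinAx (w : HCon L) : Fml L (HCon L) :=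
  ((pushF w.1 w.2).subst (instSeq (.param w))).imp (pushF w.1 w.2).all

theorem mem_params_henkinAx {w c : HCon L} (h : c ∈ (henkinAx w).params) : c.1 < w.1 ∨ c = w := by
  rcases h with h | h
  · rw [Fml.subst_eq_msubst] at h
    obtain ⟨_ | i, hi⟩ | ⟨d, hd, rfl⟩ := Fml.mem_params_msubst h
    exacts [.inr hi, hi.elim, .inl (lt_of_mem_params_pushF hd)]
  · exact .inl (lt_of_mem_params_pushF h)

/-- Henkin axioms are added in order of increasing stage, so each new constant is fresh. -/
theorem Consistent.union_range_henkinAx {T : Set (Fml L (HCon L))} (hT : Consistent T)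
    (hpar : ∀ D ∈ T, D.params = ∅) : Consistent (T ∪ Set.range henkinAx) := by
  classical
  intro h
  obtain ⟨W, hW⟩ := h.exists_finset_of_union_range
  revert hW
  refine Finset.induction_on_max_value (fun w : HCon L => w.1) W (by simpa [Consistent] using hT) ?_
  intro w W hwW hmax ih
  rw [Finset.coe_insert, Set.image_insert_eq, Set.union_insert]
  refine Consistent.insert_henkin ih (fun hw => (lt_of_mem_params_pushF hw).false) ?_
  rintro D (hD | ⟨w', hw', rfl⟩) hwD
  · simp [hpar D hD] at hwD
  · rcases mem_params_henkinAx hwD with hlt | rfl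
    exacts [(hlt.trans_le (hmax w' hw')).false, hwW hw']

theorem Prov.exists_mem_of_isChain {𝒞 : Set (Set (Fml L C))} (hchain : IsChain (· ⊆ ·) 𝒞)
    (hne : 𝒞.Nonempty) {B : Fml L C} (h : Prov (⋃₀ 𝒞) B) : ∃ S ∈ 𝒞, Prov S B := by
  induction h with
  | ax h => exact ⟨hne.some, hne.some_mem, .ax h⟩
  | hyp h =>
      obtain ⟨S, hS, hBS⟩ := h
      exact ⟨S, hS, .hyp hBS⟩
  | mp _ _ ih₁ ih₂ =>
      obtain ⟨S₁, hS₁, h₁⟩ := ih₁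
      obtain ⟨S₂, hS₂, h₂⟩ := ih₂
      obtain ⟨S, hS, h₁S, h₂S⟩ := hchain.directedOn S₁ hS₁ S₂ hS₂
      exact ⟨S, hS, .mp (h₁.mono h₁S) (h₂.mono h₂S)⟩

theorem exists_maximal_consistent {S : Set (Fml L C)} (hS : Consistent S) :
    ∃ M, S ⊆ M ∧ Consistent M ∧ ∀ B, Consistent (insert B M) → B ∈ M := by
  obtain ⟨M, hSM, hmax⟩ := zorn_subset_nonempty {T | S ⊆ T ∧ Consistent T}
    (fun 𝒞 h𝒞 hchain hne => ⟨⋃₀ 𝒞,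
      ⟨hne.elim fun T hT => (h𝒞 hT).1.trans (Set.subset_sUnion_of_mem hT), fun h =>
        let ⟨T, hT, hprov⟩ := h.exists_mem_of_isChain hchain hne
        (h𝒞 hT).2 hprov⟩,
      fun _ => Set.subset_sUnion_of_mem⟩) S ⟨subset_rfl, hS⟩
  exact ⟨M, hSM, hmax.prop.2, fun B hB =>
    hmax.mem_of_prop_insert ⟨hSM.trans (Set.subset_insert B M), hB⟩⟩

variable {M : Set (Fml L C)}

theorem mem_of_prov_of_maximal (hM : Consistent M) (hmax : ∀ B, Consistent (insert B M) → B ∈ M)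
    {B : Fml L C} (h : Prov M B) : B ∈ M :=
  hmax B fun hB => hM (.mp h hB.deduction)

theorem imp_mem_iff_of_maximal (hM : Consistent M)
    (hmax : ∀ B, Consistent (insert B M) → B ∈ M) (A B : Fml L C) :
    A.imp B ∈ M ↔ A ∉ M ∨ B ∈ M := by
  refine ⟨fun h => or_iff_not_imp_left.2 fun hA => ?_, ?_⟩
  · exact mem_of_prov_of_maximal hM hmax (.mp (.hyp (not_not.1 hA)) (.hyp h))
  · rintro (hA | hB)
    · have hAM : Prov (insert A M) (FF L C) := not_not.1 fun h => hA (hmax A h)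
      exact mem_of_prov_of_maximal hM hmax (hAM.exfalso B).deduction
    · exact mem_of_prov_of_maximal hM hmax (.mp (.hyp hB) (.ax (.a1 B A)))

theorem perfectVal_of_maximal {M : Set (Fml L (HCon L))} (hM : Consistent M)
    (hmax : ∀ B, Consistent (insert B M) → B ∈ M) (hH : ∀ w, henkinAx w ∈ M) :
    PerfectVal M := by
  refine ⟨fun h => hM (.hyp h), imp_mem_iff_of_maximal hM hmax, fun A => ⟨fun h t =>
    mem_of_prov_of_maximal hM hmax (.mp (.hyp h) (.ax (.a5 A t))), fun h => ?_⟩⟩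
  obtain ⟨n, A', rfl⟩ := exists_mem_range_pushF A
  exact ((imp_mem_iff_of_maximal hM hmax _ _).1 (hH ⟨n, A'⟩)).resolve_left (not_not.2 (h _))

theorem PerfectVal.msubst_mem_of_ax {U : Set (Fml L C')} (hU : PerfectVal U) {B : Fml L C}
    (hB : Ax B) (σ : ℕ → Tm L C') (π : C → Tm L C') : B.msubst σ π ∈ U := by
  obtain ⟨hFF, himp, hall⟩ := hU
  induction hB generalizing σ π with
  | a1 A B =>
      simp only [Fml.msubst, himp]
      tauto
  | a2 A B D =>
      simp only [Fml.msubst, himp]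
      tauto
  | a3 A =>
      show Fml.imp (A.neg.neg.msubst σ π) _ ∈ U
      rw [Fml.neg_msubst, Fml.neg_msubst]
      simp only [Fml.neg, himp]
      tauto
  | a4 A B =>
      refine (himp _ _).2 (or_iff_not_imp_left.2 fun hAB =>
        (himp _ _).2 (or_iff_not_imp_left.2 fun hA => (hall _).2 fun t => ?_))
      rw [not_not] at hAB hA
      exact ((himp _ _).1 ((hall _).1 hAB t)).resolve_left (not_not.2 ((hall _).1 hA t))
  | a5 A t =>
      show Fml.imp _ ((A.subst (instSeq t)).msubst σ π) ∈ U
      rw [Fml.msubst_inst, himp, or_iff_not_imp_left, not_not]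
      exact fun h => (hall _).1 h _
  | a6 A =>
      show Fml.imp _ (.all ((A.subst (plusSeq L C)).msubst _ _)) ∈ U
      rw [Fml.msubst_plus, himp, or_iff_not_imp_left, not_not, hall]
      exact fun h t => (Fml.subst_plusSeq_instSeq _ t).symm ▸ h
  | gen A _ ih =>
      refine (hall _).2 fun t => ?_
      rw [Fml.subst_eq_msubst, Fml.msubst_msubst]
      exact ih _ _

theorem LogicalValuation.isFilter {V : Set (Fml L Empty)} (hV : LogicalValuation V) :
    IsFilter V := by
  obtain ⟨C', U, t, hU, rfl⟩ := hV
  refine ⟨fun A hA => ?_, fun A B hA hAB => ((hU.2.1 _ _).1 hAB).resolve_left (not_not.2 hA)⟩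
  show (A.ofE.subst t) ∈ U
  rw [Fml.subst_eq_msubst]
  exact hU.msubst_mem_of_ax hA.ofE t .param

theorem PerfectVal.logicalValuation {U : Set (Fml L C)} (hU : PerfectVal U) :
    LogicalValuation {A : Fml L Empty | A.ofE ∈ U} :=
  ⟨C, U, .var, hU, by simp only [Fml.subst_var]⟩

theorem Consistent.image_ofE {T : Set (Fml L Empty)} (hT : Consistent T) :
    Consistent (Fml.ofE '' T : Set (Fml L C)) := fun h => hT <| by
  simpa only [Set.image_image, Fml.msubst_ofE, Set.image_id', FF_msubst]
    using h.msubst (C' := Empty) .var fun _ => .var 0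

theorem Consistent.exists_perfectVal {T : Set (Fml L Empty)} (hT : Consistent T) :
    ∃ U : Set (Fml L (HCon L)), PerfectVal U ∧ ∀ A ∈ T, A.ofE ∈ U := by
  obtain ⟨M, hsub, hM, hmax⟩ := exists_maximal_consistent <|
    hT.image_ofE.union_range_henkinAx (by rintro _ ⟨A, _, rfl⟩; exact A.params_ofE)
  exact ⟨M, perfectVal_of_maximal hM hmax fun w => hsub (.inr ⟨w, rfl⟩),
    fun A hA => hsub (.inl ⟨A, hA, rfl⟩)⟩

theorem IsFilter.mem_of_prov {I : Set (Fml L Empty)} (hI : IsFilter I) {B : Fml L Empty}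
    (h : Prov I B) : B ∈ I := by
  induction h with
  | ax h => exact hI.1 _ h
  | hyp h => exact h
  | mp _ _ ih₁ ih₂ => exact hI.2 _ _ ih₁ ih₂

theorem IsFilter.exists_logicalValuation {I : Set (Fml L Empty)} (hI : IsFilter I)
    {A : Fml L Empty} (hA : A ∉ I) : ∃ V, LogicalValuation V ∧ I ⊆ V ∧ A ∉ V := by
  have hcon : Consistent (insert A.neg I) := fun h => hA (hI.mem_of_prov h.by_contra)
  obtain ⟨U, hU, hTU⟩ := hcon.exists_perfectVal
  refine ⟨_, hU.logicalValuation, fun B hB => hTU B (.inr hB), fun hAU => ?_⟩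
  have hneg : A.ofE.imp (FF L Empty).ofE ∈ U := hTU _ (.inl rfl)
  rw [Fml.ofE_FF] at hneg
  exact ((hU.2.1 _ _).1 hneg).elim (· hAU) hU.1

/-- Completeness: every filter is logically closed; consequently
`Con S = Ded S`, i.e. `S ⊨ A ↔ S ⊢ A`. -/
theorem completeness {L : Lang} :
    (∀ I : Set (Fml L Empty), IsFilter I → LogicallyClosed I) ∧
    (∀ (S : Set (Fml L Empty)) (A : Fml L Empty),
      (∀ V : Set (Fml L Empty), LogicalValuation V → S ⊆ V → A ∈ V) ↔
      (∀ I : Set (Fml L Empty), IsFilter I → S ⊆ I → A ∈ I)) := by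
  refine ⟨fun I hI => ⟨{V | LogicalValuation V ∧ I ⊆ V}, fun V hV => hV.1, ?_⟩,
    fun S A => ⟨fun h I hI hSI => ?_, fun h V hV hSV => h V hV.isFilter hSV⟩⟩
  · refine (Set.subset_sInter fun V hV => hV.2).antisymm fun A hA => ?_
    by_contra hAI
    obtain ⟨V, hV, hIV, hAV⟩ := hI.exists_logicalValuation hAI
    exact hAV (hA V ⟨hV, hIV⟩)
  · by_contra hAI
    obtain ⟨V, hV, hIV, hAV⟩ := hI.exists_logicalValuation hAI
    exact hAV (h V hV (hSI.trans hIV))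
end
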